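/- Let Ω be a measurable space, Y a finite set, k ∈ ℕ₊, ℋ a family of measurable functions Ω^k → Y, and ℓ a separated k-ary loss (s(ℓ) > 0 and ℓ(x,y,y) = 0). If ℋ has the k-ary Haussler packing property with function m^HP, then the VCN_k-dimension of ℋ is at most min over ε ∈ (0, min{s(ℓ)·k!/(2k^k), 1}) of ⌊log₂⌊m^HP(ε)⌋ / (1 − h₂(ε·k^k/(s(ℓ)·k!)))⌋; in particular it is finite. -/

import Mathlib

/-!
Fix `x` and a Natarajan-shattered set `V` of `d` points, and let `μ` be the image of the uniform
measure on the `k * d` points `(i, j) : Fin k × Fin d` under `(i, j) ↦ x i` for `i < k - 1` and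
`(i, j) ↦ v j` (the `j`-th point of `V`) otherwise; lifting to `Fin k × Fin d` avoids any
bookkeeping of coincidences among the points. If the slices `F_x` and `G_x` differ at `v j`, then
every lifted tuple whose underlying tuple is a permutation of `(x, v j)` has loss at least `s`;
there are `k! d^(k-1)` of these among `(k d)^k` equally likely tuples. So a packing element `G`
within loss `ε` of `F` has `G_x = F_x` on all but `δ d` points of `V`, `δ = ε k^k / (s k!)`.
Thus the `2^d` patterns realised on `V` are covered by `m^HP(ε)` Hamming balls of radius `δ d`,
each of size at most `2^(h₂(δ) d)`, whence `d (1 - h₂(δ)) ≤ log₂ m^HP(ε)`.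
-/

open MeasureTheory

/-- Binary entropy function. -/
noncomputable def binEnt (t : ℝ) : ℝ :=
  t * Real.logb 2 (1 / t) + (1 - t) * Real.logb 2 (1 / (1 - t))

/-- `ℱ` Natarajan-shatters the finite set `A`. -/
def NatShatters {X Y : Type*} [DecidableEq X] (ℱ : Set (X → Y)) (A : Finset X) : Prop :=
  ∃ f₀ f₁ : X → Y, (∀ a ∈ A, f₀ a ≠ f₁ a) ∧
    ∀ U ⊆ A, ∃ g ∈ ℱ, ∀ a ∈ A, g a = if a ∈ U then f₁ a else f₀ a

open ProbabilityTheory Finset Real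
open scoped symmDiff Nat

lemma binEnt_eq_binEntropy_div_log_two (t : ℝ) : binEnt t = binEntropy t / log 2 := by
  rw [binEnt, binEntropy, logb, logb, one_div, one_div]
  ring

lemma binEnt_lt_one {t : ℝ} (ht : t ≠ 2⁻¹) : binEnt t < 1 := by
  rw [binEnt_eq_binEntropy_div_log_two, div_lt_one (log_pos one_lt_two)]
  exact binEntropy_lt_log_two.2 ht

lemma exp_neg_mul_binEntropy {δ : ℝ} (hδ₀ : 0 < δ) (hδ₁ : δ < 1) (n : ℝ) :
    exp (-(n * binEntropy δ)) = (1 - δ) ^ n * (δ / (1 - δ)) ^ (δ * n) := by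
  have h₁ : 0 < 1 - δ := by linarith
  rw [rpow_def_of_pos h₁, rpow_def_of_pos (div_pos hδ₀ h₁), ← exp_add, binEntropy,
    log_div hδ₀.ne' h₁.ne', log_inv, log_inv]
  ring_nf

lemma sum_range_choose_le_exp_binEntropy {n m : ℕ} {δ : ℝ} (hδ₀ : 0 < δ) (hδ : δ ≤ 2⁻¹)
    (hm : (m : ℝ) ≤ δ * n) :
    ∑ j ∈ range (m + 1), (n.choose j : ℝ) ≤ exp (n * binEntropy δ) := by
  have hδ₁ : 0 < 1 - δ := by linarith
  have hr₀ : 0 < δ / (1 - δ) := div_pos hδ₀ hδ₁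
  have hr₁ : δ / (1 - δ) ≤ 1 := (div_le_one hδ₁).2 (by linarith)
  have hmn : m ≤ n := by
    have : (m : ℝ) ≤ n := hm.trans (mul_le_of_le_one_left n.cast_nonneg (by linarith))
    exact_mod_cast this
  have hterm : ∀ j ∈ range (m + 1), (n.choose j : ℝ) * exp (-(n * binEntropy δ)) ≤
      n.choose j * (δ ^ j * (1 - δ) ^ (n - j)) := by
    intro j hj
    have hjm : (j : ℝ) ≤ m := by exact_mod_cast Nat.lt_succ_iff.mp (mem_range.mp hj)
    have hjn : j ≤ n := by exact_mod_cast (Nat.lt_succ_iff.mp (mem_range.mp hj)).trans hmn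
    gcongr
    calc exp (-(n * binEntropy δ)) = (1 - δ) ^ (n : ℝ) * (δ / (1 - δ)) ^ (δ * n) :=
          exp_neg_mul_binEntropy hδ₀ (by linarith) n
      _ ≤ (1 - δ) ^ (n : ℝ) * (δ / (1 - δ)) ^ (j : ℝ) :=
          mul_le_mul_of_nonneg_left (rpow_le_rpow_of_exponent_ge hr₀ hr₁ (hjm.trans hm))
            (by positivity)
      _ = δ ^ j * (1 - δ) ^ (n - j) := by
          rw [rpow_natCast, rpow_natCast, div_pow, ← Nat.sub_add_cancel hjn, pow_add,
            Nat.add_sub_cancel]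
          field_simp
  have hbinom : ∑ j ∈ range (m + 1), (n.choose j : ℝ) * (δ ^ j * (1 - δ) ^ (n - j)) ≤ 1 :=
    calc _ ≤ ∑ j ∈ range (n + 1), (n.choose j : ℝ) * (δ ^ j * (1 - δ) ^ (n - j)) :=
          sum_le_sum_of_subset_of_nonneg (range_subset_range.2 (by omega))
            fun _ _ _ => by positivity
      _ = (δ + (1 - δ)) ^ n := by
          rw [add_pow]; exact sum_congr rfl fun _ _ => by ring
      _ = 1 := by simp
  have := (sum_le_sum hterm).trans hbinom
  rwa [← sum_mul, exp_neg, ← div_eq_mul_inv, div_le_one (exp_pos _)] at this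

section HammingBall
variable {α : Type*} [Fintype α] [DecidableEq α]

lemma card_filter_card_le_le_sum_choose (m : ℕ) :
    #{Z : Finset α | #Z ≤ m} ≤ ∑ j ∈ range (m + 1), (Fintype.card α).choose j :=
  calc #{Z : Finset α | #Z ≤ m} ≤ #((range (m + 1)).biUnion fun j => powersetCard j univ) :=
        card_le_card fun Z hZ => by
          simp only [mem_filter, mem_univ, true_and] at hZ
          simp [mem_biUnion, hZ]
    _ ≤ ∑ j ∈ range (m + 1), #(powersetCard j (univ : Finset α)) := card_biUnion_le
    _ = _ := by simp only [card_powersetCard, card_univ]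

lemma card_filter_card_symmDiff_le_le_sum_choose (W : Finset α) (m : ℕ) :
    #{U : Finset α | #(U ∆ W) ≤ m} ≤ ∑ j ∈ range (m + 1), (Fintype.card α).choose j :=
  (card_le_card_of_injOn (· ∆ W) (fun U hU => by simpa using hU)
    (symmDiff_left_injective W).injOn).trans (card_filter_card_le_le_sum_choose m)

lemma two_pow_card_le_card_mul_sum_choose {C : Finset (Finset α)} {m : ℕ}
    (hC : ∀ U, ∃ W ∈ C, #(U ∆ W) ≤ m) :
    2 ^ Fintype.card α ≤ #C * ∑ j ∈ range (m + 1), (Fintype.card α).choose j :=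
  calc 2 ^ Fintype.card α = #(univ : Finset (Finset α)) := by simp [Fintype.card_finset]
    _ ≤ #(C.biUnion fun W => {U : Finset α | #(U ∆ W) ≤ m}) := card_le_card fun U _ => by
        obtain ⟨W, hW, hUW⟩ := hC U
        exact mem_biUnion.2 ⟨W, hW, by simpa using hUW⟩
    _ ≤ ∑ W ∈ C, #{U : Finset α | #(U ∆ W) ≤ m} := card_biUnion_le
    _ ≤ ∑ _W ∈ C, ∑ j ∈ range (m + 1), (Fintype.card α).choose j :=
        sum_le_sum fun W _ => card_filter_card_symmDiff_le_le_sum_choose W m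
    _ = _ := by rw [sum_const, smul_eq_mul]

lemma symmDiff_filter_eq_subset_filter_ne {β : Type*} [DecidableEq β] {f₀ f₁ a b : α → β}
    (hf : ∀ i, f₀ i ≠ f₁ i) {U : Finset α} (ha : ∀ i, a i = if i ∈ U then f₁ i else f₀ i) :
    U ∆ ({i | b i = f₁ i} : Finset α) ⊆ ({i | a i ≠ b i} : Finset α) := by
  intro i hi
  simp only [mem_symmDiff, mem_filter, mem_univ, true_and] at hi ⊢
  rw [ha]
  split_ifs with hiU
  · exact fun h => hi.elim (fun h' => h'.2 h.symm) fun h' => h'.2 hiU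
  · exact fun h => hi.elim (fun h' => hiU h'.1) fun h' => hf i (h.trans h'.1)

end HammingBall

lemma le_logb_div_one_sub_binEnt {n M : ℕ} {δ : ℝ} (hδ : δ ≠ 2⁻¹)
    (h : (2 : ℝ) ^ n ≤ M * exp (n * binEntropy δ)) :
    (n : ℝ) ≤ logb 2 M / (1 - binEnt δ) := by
  have hlog2 : 0 < log 2 := log_pos one_lt_two
  have hgap : 0 < log 2 - binEntropy δ := sub_pos.2 (binEntropy_lt_log_two.2 hδ)
  have hM : (0 : ℝ) < M := pos_of_mul_pos_left ((pow_pos two_pos n).trans_le h) (exp_pos _).le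
  have hlog : n * log 2 ≤ log M + n * binEntropy δ := by
    simpa [log_mul hM.ne' (exp_pos _).ne', log_pow] using log_le_log (by positivity) h
  rw [binEnt_eq_binEntropy_div_log_two, logb, one_sub_div hlog2.ne',
    div_div_div_cancel_right₀ hlog2.ne', le_div_iff₀ hgap]
  linarith

lemma card_le_logb_div_one_sub_binEnt_of_cover {α : Type*} [Fintype α] [DecidableEq α]
    {C : Finset (Finset α)} {M : ℕ} {δ : ℝ} (hδ₀ : 0 < δ) (hδ : δ < 2⁻¹) (hC : #C ≤ M)
    (hcover : ∀ U, ∃ W ∈ C, (#(U ∆ W) : ℝ) ≤ δ * Fintype.card α) :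
    (Fintype.card α : ℝ) ≤ logb 2 M / (1 - binEnt δ) := by
  set m := ⌊δ * Fintype.card α⌋₊
  have hcover' : ∀ U, ∃ W ∈ C, #(U ∆ W) ≤ m := fun U =>
    (hcover U).imp fun _ ⟨hW, hUW⟩ => ⟨hW, Nat.le_floor hUW⟩
  have hball := sum_range_choose_le_exp_binEntropy (n := Fintype.card α) hδ₀ hδ.le
    (Nat.floor_le (by positivity))
  refine le_logb_div_one_sub_binEnt hδ.ne ?_
  calc (2 : ℝ) ^ Fintype.card α ≤ #C * ∑ j ∈ range (m + 1), ((Fintype.card α).choose j : ℝ) := by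
        exact_mod_cast two_pow_card_le_card_mul_sum_choose hcover'
    _ ≤ _ := mul_le_mul (by exact_mod_cast hC) hball (by positivity) (by positivity)

lemma NatShatters.exists_fin_enum {X Y : Type*} [DecidableEq X] {ℱ : Set (X → Y)}
    {V : Finset X} (h : NatShatters ℱ V) :
    ∃ (v : Fin #V → X) (f₀ f₁ : Fin #V → Y), (∀ j, f₀ j ≠ f₁ j) ∧
      ∀ U : Finset (Fin #V), ∃ g ∈ ℱ, ∀ j, g (v j) = if j ∈ U then f₁ j else f₀ j := by
  obtain ⟨f₀, f₁, hf, hU⟩ := h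
  let v : Fin #V ↪ X := V.equivFin.symm.toEmbedding.trans (Function.Embedding.subtype _)
  refine ⟨v, f₀ ∘ v, f₁ ∘ v, fun j => hf _ (V.equivFin.symm j).2, fun U => ?_⟩
  obtain ⟨g, hg, hgU⟩ := hU (U.map v) fun _ ha => by
    obtain ⟨j, -, rfl⟩ := mem_map.1 ha
    exact (V.equivFin.symm j).2
  exact ⟨g, hg, fun j => by simpa using hgU (v j) (V.equivFin.symm j).2⟩

lemma integral_pi_map_uniformOn {Ω ι κ : Type*} [MeasurableSpace Ω] [Fintype ι] [Nonempty ι]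
    [MeasurableSpace ι] [MeasurableSingletonClass ι] [Fintype κ] [DecidableEq κ] {e : ι → Ω}
    (he : Measurable e) {f : (κ → Ω) → ℝ}
    (hf : AEStronglyMeasurable f (Measure.pi fun _ : κ => (uniformOn .univ : Measure ι).map e)) :
    ∫ z, f z ∂(Measure.pi fun _ : κ => (uniformOn .univ : Measure ι).map e) =
      ((Fintype.card ι : ℝ) ^ Fintype.card κ)⁻¹ * ∑ w : κ → ι, f (e ∘ w) := by
  rw [← Measure.pi_map_pi fun _ => he.aemeasurable] at hf ⊢
  have hE : Measurable fun (w : κ → ι) i => e (w i) :=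
    measurable_pi_lambda _ fun i => he.comp (measurable_pi_apply i)
  rw [integral_map hE.aemeasurable hf]
  have hpi : (Measure.pi fun _ : κ => (uniformOn .univ : Measure ι)) = uniformOn .univ := by
    rw [← uniformOn_pi, Set.pi_univ]
  rw [hpi, integral_fintype .of_finite, mul_sum]
  refine sum_congr rfl fun w _ => ?_
  rw [smul_eq_mul, measureReal_def, uniformOn_univ]
  simp [ENNReal.toReal_inv, Function.comp_def]

section PermutedEvaluation
variable {Ω Y : Type*} {k d : ℕ}

def permEval (H : (Fin k → Ω) → Y) (z : Fin k → Ω) (σ : Equiv.Perm (Fin k)) : Y := H (z ∘ σ)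

lemma permEval_comp_perm_ne_iff {F G : (Fin k → Ω) → Y} (z : Fin k → Ω)
    (τ : Equiv.Perm (Fin k)) :
    permEval F (z ∘ τ) ≠ permEval G (z ∘ τ) ↔ permEval F z ≠ permEval G z := by
  refine not_congr ⟨fun h => funext fun σ => ?_, fun h => funext fun σ => congrFun h (τ * σ)⟩
  simpa [permEval, Function.comp_def] using congrFun h (τ⁻¹ * σ)

def extendLast (x : Fin (k - 1) → Ω) (t : Ω) (i : Fin k) : Ω :=
  if h : (i : ℕ) < k - 1 then x ⟨i, h⟩ else t

def liftPoint (x : Fin (k - 1) → Ω) (v : Fin d → Ω) (p : Fin k × Fin d) : Ω :=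
  extendLast x (v p.2) p.1

lemma liftPoint_comp_update (hk : 0 < k) (x : Fin (k - 1) → Ω) (v : Fin d → Ω)
    (σ : Equiv.Perm (Fin k)) (b : Fin k → Fin d) (j : Fin d) :
    liftPoint x v ∘ (fun i => (σ i, Function.update b (σ.symm ⟨k - 1, by omega⟩) j i)) =
      extendLast x (v j) ∘ σ := by
  funext i
  simp only [Function.comp_apply, liftPoint, extendLast]
  split_ifs with h
  · rfl
  · rw [show i = σ.symm ⟨k - 1, by omega⟩ by
      rw [Equiv.eq_symm_apply]; ext; have := (σ i).isLt; simp only; omega]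
    simp

lemma card_filter_permEval_ne_mul_le [DecidableEq Y] (hk : 0 < k) (x : Fin (k - 1) → Ω)
    (v : Fin d → Ω) (F G : (Fin k → Ω) → Y) :
    #{j | permEval F (extendLast x (v j)) ≠ permEval G (extendLast x (v j))} * (k ! * d ^ k) ≤
      #{w : Fin k → Fin k × Fin d |
        permEval F (liftPoint x v ∘ w) ≠ permEval G (liftPoint x v ∘ w)} * d := by
  set last : Fin k := ⟨k - 1, by omega⟩
  set J : Finset (Fin d) :=
    {j | permEval F (extendLast x (v j)) ≠ permEval G (extendLast x (v j))}
  set D : Finset (Fin k → Fin k × Fin d) :=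
    {w | permEval F (liftPoint x v ∘ w) ≠ permEval G (liftPoint x v ∘ w)}
  -- `b (σ⁻¹ last)` records the coordinate that `update` overwrites, making the map injective
  let Φ : Fin d × Equiv.Perm (Fin k) × (Fin k → Fin d) → (Fin k → Fin k × Fin d) × Fin d :=
    fun p => (fun i => (p.2.1 i, Function.update p.2.2 (p.2.1.symm last) p.1 i),
      p.2.2 (p.2.1.symm last))
  have hmaps : Set.MapsTo Φ ↑(J ×ˢ (univ : Finset (Equiv.Perm (Fin k) × (Fin k → Fin d))))
      ↑(D ×ˢ (univ : Finset (Fin d))) := by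
    rintro ⟨j, σ, b⟩ hp
    simp only [coe_product, Set.mem_prod, mem_coe, mem_filter, mem_univ, true_and, and_true, J,
      D] at hp ⊢
    rw [liftPoint_comp_update hk, permEval_comp_perm_ne_iff]
    exact hp
  have hinj : Function.Injective Φ := by
    rintro ⟨j, σ, b⟩ ⟨j', σ', b'⟩ h
    simp only [Φ, Prod.mk.injEq, funext_iff] at h
    obtain ⟨h, hlast⟩ := h
    obtain rfl : σ = σ' := Equiv.ext fun i => (h i).1
    have hj := (h (σ.symm last)).2
    simp only [Function.update_self] at hj
    subst hj
    refine Prod.ext rfl (Prod.ext rfl (funext fun i => ?_))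
    by_cases hi : i = σ.symm last
    · rw [hi]
      exact hlast
    · simpa [Function.update_of_ne hi] using (h i).2
  simpa [card_product, Fintype.card_perm, mul_comm, mul_assoc, mul_left_comm] using
    card_le_card_of_injOn Φ hmaps hinj.injOn

variable [MeasurableSpace Ω]

noncomputable def liftMeasure (x : Fin (k - 1) → Ω) (v : Fin d → Ω) : Measure Ω :=
  (uniformOn .univ : Measure (Fin k × Fin d)).map (liftPoint x v)

lemma isProbabilityMeasure_liftMeasure (hk : 0 < k) (hd : 0 < d) (x : Fin (k - 1) → Ω)
    (v : Fin d → Ω) : IsProbabilityMeasure (liftMeasure x v) :=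
  have : Nonempty (Fin k × Fin d) := ⟨(⟨0, hk⟩, ⟨0, hd⟩)⟩
  Measure.isProbabilityMeasure_map (measurable_of_finite _).aemeasurable

lemma integral_pi_liftMeasure (hk : 0 < k) (hd : 0 < d) (x : Fin (k - 1) → Ω) (v : Fin d → Ω)
    {f : (Fin k → Ω) → ℝ}
    (hf : AEStronglyMeasurable f (Measure.pi fun _ : Fin k => liftMeasure x v)) :
    ∫ z, f z ∂(Measure.pi fun _ : Fin k => liftMeasure x v) =
      (((k * d : ℕ) : ℝ) ^ k)⁻¹ * ∑ w : Fin k → Fin k × Fin d, f (liftPoint x v ∘ w) := by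
  have : Nonempty (Fin k × Fin d) := ⟨(⟨0, hk⟩, ⟨0, hd⟩)⟩
  simpa [liftMeasure] using integral_pi_map_uniformOn (measurable_of_finite (liftPoint x v)) hf

lemma card_filter_permEval_ne_le_of_integral_le [DecidableEq Y] (hk : 0 < k) (hd : 0 < d)
    (x : Fin (k - 1) → Ω) (v : Fin d → Ω)
    {ℓ : (Fin k → Ω) → (Equiv.Perm (Fin k) → Y) → (Equiv.Perm (Fin k) → Y) → ℝ}
    (hnn : ∀ z y y', 0 ≤ ℓ z y y') {s : ℝ} (hs : 0 < s) (hsep : ∀ z y y', y ≠ y' → s ≤ ℓ z y y')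
    {F G : (Fin k → Ω) → Y} {ε : ℝ}
    (hmeas : AEStronglyMeasurable (fun z => ℓ z (permEval G z) (permEval F z))
      (Measure.pi fun _ : Fin k => liftMeasure x v))
    (hloss : ∫ z, ℓ z (permEval G z) (permEval F z)
      ∂(Measure.pi fun _ : Fin k => liftMeasure x v) ≤ ε) :
    (#{j | permEval F (extendLast x (v j)) ≠ permEval G (extendLast x (v j))} : ℝ) ≤
      ε * k ^ k / (s * k !) * d := by
  set J : Finset (Fin d) :=
    {j | permEval F (extendLast x (v j)) ≠ permEval G (extendLast x (v j))}
  set D : Finset (Fin k → Fin k × Fin d) :=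
    {w | permEval F (liftPoint x v ∘ w) ≠ permEval G (liftPoint x v ∘ w)}
  set L : (Fin k → Fin k × Fin d) → ℝ := fun w =>
    ℓ (liftPoint x v ∘ w) (permEval G (liftPoint x v ∘ w)) (permEval F (liftPoint x v ∘ w))
  have hsum : #D * s ≤ ∑ w, L w :=
    calc #D * s = ∑ w ∈ D, s := by rw [sum_const, nsmul_eq_mul]
      _ ≤ ∑ w ∈ D, L w := sum_le_sum fun w hw => hsep _ _ _ (mem_filter.1 hw).2.symm
      _ ≤ ∑ w, L w := sum_le_sum_of_subset_of_nonneg (subset_univ D) fun _ _ _ => hnn _ _ _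
  have hLε : ∑ w, L w ≤ ((k * d : ℕ) : ℝ) ^ k * ε := by
    rw [integral_pi_liftMeasure hk hd x v hmeas] at hloss
    rwa [inv_mul_le_iff₀ (by positivity)] at hloss
  have hcount : (#J : ℝ) * (k ! * d ^ k) ≤ #D * d := by
    exact_mod_cast card_filter_permEval_ne_mul_le hk x v F G
  rw [div_mul_eq_mul_div, le_div_iff₀ (by positivity)]
  refine le_of_mul_le_mul_right ?_ (by positivity : (0 : ℝ) < d ^ k)
  calc (#J : ℝ) * (s * k !) * d ^ k = #J * (k ! * d ^ k) * s := by ring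
    _ ≤ #D * d * s := by gcongr
    _ = #D * s * d := by ring
    _ ≤ ((k * d : ℕ) : ℝ) ^ k * ε * d :=
        mul_le_mul_of_nonneg_right (hsum.trans hLε) d.cast_nonneg
    _ = ε * k ^ k * d * d ^ k := by push_cast; ring

end PermutedEvaluation

theorem stmt15_general {Ω Y : Type*} [MeasurableSpace Ω] [DecidableEq Ω]
    [MeasurableSpace Y] (k : ℕ) (hk : 0 < k)
    (ℋ : Set ((Fin k → Ω) → Y)) (hℋmeas : ∀ H ∈ ℋ, Measurable H)
    (ℓ : (Fin k → Ω) → (Equiv.Perm (Fin k) → Y) → (Equiv.Perm (Fin k) → Y) → ℝ)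
    (hnn : ∀ x y y', 0 ≤ ℓ x y y')
    -- `ℓ` is separated with separation constant `s`
    (s : ℝ) (hs : 0 < s) (hsep : ∀ x y y', y ≠ y' → s ≤ ℓ x y y')
    -- total losses are well defined
    (hint : ∀ μ : Measure Ω, IsProbabilityMeasure μ →
      ∀ F G : (Fin k → Ω) → Y, Measurable F → Measurable G →
        Integrable (fun z => ℓ z (fun σ => G (fun i => z (σ i))) (fun σ => F (fun i => z (σ i))))
          (Measure.pi fun _ : Fin k => μ))
    -- `ℋ` has the `k`-ary Haussler packing property with function `mHP`
    (mHP : ℝ → ℝ)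
    (hHP : ∀ ε : ℝ, 0 < ε → ε < 1 → ∀ μ : Measure Ω, IsProbabilityMeasure μ →
      ∃ ℋ' : Finset ((Fin k → Ω) → Y), ↑ℋ' ⊆ ℋ ∧ (ℋ'.card : ℝ) ≤ mHP ε ∧
        ∀ F ∈ ℋ, ∃ H ∈ ℋ',
          (∫ z, ℓ z (fun σ => H (fun i => z (σ i))) (fun σ => F (fun i => z (σ i)))
              ∂(Measure.pi fun _ : Fin k => μ)) ≤ ε) :
    -- conclusion: bound on the `VCN_k`-dimension
    ∀ x : Fin (k - 1) → Ω, ∀ V : Finset Ω,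
      NatShatters
        {g : Ω → (Equiv.Perm (Fin k) → Y) | ∃ H ∈ ℋ, g = fun t σ =>
          H (fun i => if h : ((σ i : ℕ)) < k - 1 then x ⟨(σ i : ℕ), h⟩ else t)} V →
      ∀ ε : ℝ, 0 < ε → ε < min (s * k.factorial / (2 * (k : ℝ) ^ k)) 1 →
        (V.card : ℤ) ≤
          ⌊Real.logb 2 (⌊mHP ε⌋₊ : ℝ) /
            (1 - binEnt (ε * (k : ℝ) ^ k / (s * k.factorial)))⌋ := by
  classical
  intro x V hV ε hε hεlt
  set δ := ε * (k : ℝ) ^ k / (s * k !)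
  have hδ₀ : 0 < δ := by positivity
  have hδ : δ < 2⁻¹ := by
    have := (lt_min_iff.1 hεlt).1
    rw [lt_div_iff₀ (by positivity)] at this
    rw [div_lt_iff₀ (by positivity)]
    linarith
  obtain hV₀ | hVpos := (#V).eq_zero_or_pos
  · rw [hV₀, Nat.cast_zero, Int.floor_nonneg]
    exact div_nonneg (div_nonneg (log_natCast_nonneg _) (log_nonneg one_le_two))
      (sub_nonneg.2 (binEnt_lt_one hδ.ne).le)
  obtain ⟨v, f₀, f₁, hf, hshat⟩ := hV.exists_fin_enum
  have hμ := isProbabilityMeasure_liftMeasure hk hVpos x v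
  obtain ⟨ℋ', hℋ', hcard, hnear⟩ := hHP ε hε (lt_min_iff.1 hεlt).2 (liftMeasure x v) hμ
  set C := ℋ'.image fun G => ({j | permEval G (extendLast x (v j)) = f₁ j} : Finset (Fin #V))
  have hcover : ∀ U, ∃ W ∈ C, (#(U ∆ W) : ℝ) ≤ δ * #V := by
    intro U
    obtain ⟨_, ⟨F, hF, rfl⟩, hFU⟩ := hshat U
    obtain ⟨G, hG, hFG⟩ := hnear F hF
    refine ⟨_, mem_image_of_mem _ hG, ?_⟩
    calc (#(U ∆ _) : ℝ)
        ≤ #{j | permEval F (extendLast x (v j)) ≠ permEval G (extendLast x (v j))} := by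
          exact_mod_cast card_le_card (symmDiff_filter_eq_subset_filter_ne hf hFU)
      _ ≤ δ * #V := card_filter_permEval_ne_le_of_integral_le hk hVpos x v hnn hs hsep
          (hint _ hμ F G (hℋmeas F hF) (hℋmeas G (hℋ' hG))).aestronglyMeasurable hFG
  rw [Int.le_floor, Int.cast_natCast]
  simpa using card_le_logb_div_one_sub_binEnt_of_cover (C := C) hδ₀ hδ
    (card_image_le.trans (Nat.le_floor hcard)) (by rwa [Fintype.card_fin])

/-- The `k`-ary Haussler packing property (for a separated loss) implies finiteness of the
`VCN_k`-dimension, with the explicit entropy bound. -/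
theorem stmt15 {Ω Y : Type*} [MeasurableSpace Ω] [DecidableEq Ω] [Fintype Y]
    [MeasurableSpace Y] [MeasurableSingletonClass Y] (k : ℕ) (hk : 0 < k)
    (ℋ : Set ((Fin k → Ω) → Y)) (hℋmeas : ∀ H ∈ ℋ, Measurable H)
    (ℓ : (Fin k → Ω) → (Equiv.Perm (Fin k) → Y) → (Equiv.Perm (Fin k) → Y) → ℝ)
    (hnn : ∀ x y y', 0 ≤ ℓ x y y')
    -- `ℓ` is separated with separation constant `s`
    (s : ℝ) (hs : 0 < s) (hsep : ∀ x y y', y ≠ y' → s ≤ ℓ x y y')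
    (hrefl : ∀ x y, ℓ x y y = 0)
    -- total losses are well defined
    (hint : ∀ μ : Measure Ω, IsProbabilityMeasure μ →
      ∀ F G : (Fin k → Ω) → Y, Measurable F → Measurable G →
        Integrable (fun z => ℓ z (fun σ => G (fun i => z (σ i))) (fun σ => F (fun i => z (σ i))))
          (Measure.pi fun _ : Fin k => μ))
    -- `ℋ` has the `k`-ary Haussler packing property with function `mHP`
    (mHP : ℝ → ℝ)
    (hHP : ∀ ε : ℝ, 0 < ε → ε < 1 → ∀ μ : Measure Ω, IsProbabilityMeasure μ →
      ∃ ℋ' : Finset ((Fin k → Ω) → Y), ↑ℋ' ⊆ ℋ ∧ (ℋ'.card : ℝ) ≤ mHP ε ∧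
        ∀ F ∈ ℋ, ∃ H ∈ ℋ',
          (∫ z, ℓ z (fun σ => H (fun i => z (σ i))) (fun σ => F (fun i => z (σ i)))
              ∂(Measure.pi fun _ : Fin k => μ)) ≤ ε) :
    -- conclusion: bound on the `VCN_k`-dimension
    ∀ x : Fin (k - 1) → Ω, ∀ V : Finset Ω,
      NatShatters
        {g : Ω → (Equiv.Perm (Fin k) → Y) | ∃ H ∈ ℋ, g = fun t σ =>
          H (fun i => if h : ((σ i : ℕ)) < k - 1 then x ⟨(σ i : ℕ), h⟩ else t)} V →
      ∀ ε : ℝ, 0 < ε → ε < min (s * k.factorial / (2 * (k : ℝ) ^ k)) 1 →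
        (V.card : ℤ) ≤
          ⌊Real.logb 2 (⌊mHP ε⌋₊ : ℝ) /
            (1 - binEnt (ε * (k : ℝ) ^ k / (s * k.factorial)))⌋ :=
  stmt15_general k hk ℋ hℋmeas ℓ hnn s hs hsep hint mHP hHP
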